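/- Let a, c, e be nonnegative integers with a ≤ c. Define on the set S = {(b,d) ∈ ℤ≥0 × ℤ≥0 : b ≤ a, d ≤ a − b + c} the statistics area(b,d) = 2a − 2b + c − d and bounce(b,d) = 3b + d − a if 2(a − b) ≤ d, and bounce(b,d) = 2b + ⌈d/2⌉ if 2(a − b) > d. Then there exists an involution φ : S → S with area(φ(b,d)) = bounce(b,d) and bounce(φ(b,d)) = area(b,d). -/
import Mathlib

private def myf (a c : ℤ) (p : ℤ × ℤ) : ℤ × ℤ :=
  let b := p.1; let d := p.2
  if 2 * (a - b) ≤ d then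
    if d ≤ a - 3 * b + c then (b, 3 * a - 5 * b + c - d)
    else ((a - b + c - d - (a + b + c + d) % 2) / 2, 2 * a - 2 * b + (a + b + c + d) % 2)
  else
    if 2 * b + (d + 1) / 2 ≤ c then (a - d / 2, c - 2 * b + d / 2 - d % 2)
    else ((2 * a - 2 * b + c - d - d / 2 - (c + d + d / 2) % 2) / 2,
          d - d % 2 + (c + d + d / 2) % 2)

private lemma ceil_half (d : ℤ) : ⌈(d : ℚ) / 2⌉ = (d + 1) / 2 := by
  rcases Int.even_or_odd d with ⟨k, hk⟩ | ⟨k, hk⟩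
  · subst hk
    have : ((k + k : ℤ) : ℚ) / 2 = (k : ℚ) := by push_cast; ring
    rw [this, Int.ceil_intCast]
    omega
  · subst hk
    have : ((2 * k + 1 : ℤ) : ℚ) / 2 = (1 / 2 : ℚ) + (k : ℤ) := by push_cast; ring
    rw [this, Int.ceil_add_intCast]
    have h2 : ⌈(1 / 2 : ℚ)⌉ = 1 := by
      rw [Int.ceil_eq_iff] <;> norm_num
    rw [h2]
    omega

private lemma myf_mem (a c : ℤ) (ha : 0 ≤ a) (hac : a ≤ c) (p : ℤ × ℤ)
    (h : 0 ≤ p.1 ∧ 0 ≤ p.2 ∧ p.1 ≤ a ∧ p.2 ≤ a - p.1 + c) :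
    0 ≤ (myf a c p).1 ∧ 0 ≤ (myf a c p).2 ∧ (myf a c p).1 ≤ a ∧
      (myf a c p).2 ≤ a - (myf a c p).1 + c := by
  obtain ⟨b, d⟩ := p
  simp only [myf] at *
  split_ifs <;> simp_all <;> omega

private lemma myf_invol (a c : ℤ) (ha : 0 ≤ a) (hac : a ≤ c) (p : ℤ × ℤ)
    (h : 0 ≤ p.1 ∧ 0 ≤ p.2 ∧ p.1 ≤ a ∧ p.2 ≤ a - p.1 + c) :
    myf a c (myf a c p) = p := by
  obtain ⟨b, d⟩ := p
  simp only [myf] at *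
  split_ifs <;> simp_all [Prod.ext_iff] <;> omega

theorem stmt_13 (a c e : ℕ) (hac : a ≤ c) :
    ∃ φ : {p : ℤ × ℤ // 0 ≤ p.1 ∧ 0 ≤ p.2 ∧ p.1 ≤ (a : ℤ) ∧ p.2 ≤ (a : ℤ) - p.1 + c} →
          {p : ℤ × ℤ // 0 ≤ p.1 ∧ 0 ≤ p.2 ∧ p.1 ≤ (a : ℤ) ∧ p.2 ≤ (a : ℤ) - p.1 + c},
      Function.Involutive φ ∧
      ∀ p, (let area : ℤ × ℤ → ℤ := fun q => 2 * (a : ℤ) - 2 * q.1 + c - q.2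
            let bounce : ℤ × ℤ → ℤ := fun q =>
              if 2 * ((a : ℤ) - q.1) ≤ q.2 then 3 * q.1 + q.2 - a
              else 2 * q.1 + ⌈(q.2 : ℚ) / 2⌉
            area (φ p).val = bounce p.val ∧ bounce (φ p).val = area p.val) := by
  have ha : (0 : ℤ) ≤ (a : ℤ) := Int.ofNat_nonneg a
  have hac' : (a : ℤ) ≤ (c : ℤ) := by exact_mod_cast hac
  refine ⟨fun p => ⟨myf a c p.val, myf_mem a c ha hac' p.val p.2⟩, ?_, ?_⟩
  · intro p
    exact Subtype.ext (myf_invol a c ha hac' p.val p.2)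
  · rintro ⟨⟨b, d⟩, hb, hd, hba, hdb⟩
    simp only
    have hm := myf_mem a c ha hac' (b, d) ⟨hb, hd, hba, hdb⟩
    simp only [myf] at *
    simp only [ceil_half]
    constructor <;> (split_ifs <;> simp_all <;> omega)
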